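/- arXiv:2312.17569 — 5 statements merged into one kernel-verified Lean document; each statement's English description precedes it below -/
import Mathlib

section
/- Let M ≥ 4 be a composite number (M = a·b with a, b ≥ 2). Define V(q) = 1/q - 1/lcm(M, q) for positive integers q with q ≤ M - 2. If q2 minimizes V over {1, ..., M - 2}, then gcd(q2, M) > 1. -/
theorem stmt_5 (M a b q2 : ℕ) (hM : 4 ≤ M) (hab : M = a * b) (ha : 2 ≤ a) (hb : 2 ≤ b)
    (hq : 1 ≤ q2) (hle : q2 ≤ M - 2)
    (hmin : ∀ q : ℕ, 1 ≤ q → q ≤ M - 2 →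
      (1 : ℚ) / q2 - 1 / (Nat.lcm M q2) ≤ (1 : ℚ) / q - 1 / (Nat.lcm M q)) :
    1 < Nat.gcd q2 M := by
  by_contra hcon
  push_neg at hcon
  have hgpos : 0 < Nat.gcd q2 M := Nat.gcd_pos_of_pos_left M hq
  have hg : Nat.gcd q2 M = 1 := by omega
  obtain ⟨c, rfl⟩ : ∃ c, a = c + 2 := ⟨a - 2, by omega⟩
  obtain ⟨d, rfl⟩ : ∃ d, b = d + 2 := ⟨b - 2, by omega⟩
  subst hab
  -- lcm of M and q2 is M * q2 since they are coprime
  have hlcm2 : Nat.lcm ((c + 2) * (d + 2)) q2 = (c + 2) * (d + 2) * q2 :=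
    Nat.Coprime.lcm_eq_mul (Nat.coprime_comm.mp hg)
  -- candidate q = (d+2) * (c+1) = M - b
  have hcop : Nat.Coprime (c + 2) (c + 1) := by
    unfold Nat.Coprime
    rw [show c + 2 = 1 + (c + 1) by ring, Nat.gcd_add_self_left, Nat.gcd_one_left]
  have hlcmq : Nat.lcm ((c + 2) * (d + 2)) ((d + 2) * (c + 1))
      = (c + 2) * (d + 2) * (c + 1) := by
    have h1 : (c + 2) * (d + 2) = (d + 2) * (c + 2) := by ring
    rw [h1, Nat.lcm_mul_left, Nat.Coprime.lcm_eq_mul hcop]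
    ring
  have hqle : (d + 2) * (c + 1) ≤ (c + 2) * (d + 2) - 2 := by
    have h2 : (d + 2) * (c + 1) + (d + 2) = (c + 2) * (d + 2) := by ring
    omega
  have hkey := hmin ((d + 2) * (c + 1)) (Nat.mul_pos (by omega) (by omega)) hqle
  rw [hlcm2, hlcmq] at hkey
  have hq2le : (q2 : ℚ) ≤ ((c : ℚ) + 2) * ((d : ℚ) + 2) - 2 := by
    have h3 : q2 + 2 ≤ (c + 2) * (d + 2) := by
      have h2 : 2 ≤ (c + 2) * (d + 2) := by nlinarith
      omega
    have h4 : ((q2 : ℚ) + 2) ≤ ((c : ℚ) + 2) * ((d : ℚ) + 2) := by exact_mod_cast h3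
    linarith
  have hq2pos : (0 : ℚ) < q2 := by exact_mod_cast hq
  push_cast at hkey
  rw [div_sub_div _ _ (by positivity) (by positivity),
      div_sub_div _ _ (by positivity) (by positivity)] at hkey
  rw [div_le_div_iff₀ (by positivity) (by positivity)] at hkey
  have hKpos : (0 : ℚ) < ((d : ℚ) + 2) * ((c : ℚ) + 1) *
      (((c : ℚ) + 2) * ((d : ℚ) + 2)) * ((c : ℚ) + 1) * (q2 : ℚ) := by positivity
  have h1 : ((c : ℚ) + 2) * ((d : ℚ) + 2) - 1 ≤ (q2 : ℚ) :=
    le_of_mul_le_mul_right (by nlinarith [hkey]) hKpos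
  linarith
end

section
/- Let M ≥ 4 be a composite number. If q2 minimizes V(q) = 1/q - 1/lcm(M, q) over positive integers q ≤ M - 2, then gcd(q2, M) is a non-trivial divisor of M, i.e., 1 < gcd(q2, M) < M. -/
theorem stmt_6 (M a b q2 : ℕ) (hM : 4 ≤ M) (hab : M = a * b) (ha : 2 ≤ a) (hb : 2 ≤ b)
    (hq : 1 ≤ q2) (hle : q2 ≤ M - 2)
    (hmin : ∀ q : ℕ, 1 ≤ q → q ≤ M - 2 →
      (1 : ℚ) / q2 - 1 / (Nat.lcm M q2) ≤ (1 : ℚ) / q - 1 / (Nat.lcm M q)) :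
    1 < Nat.gcd q2 M ∧ Nat.gcd q2 M < M := by
  have h2a : 2 * a ≤ M := by nlinarith
  have haM : a + 2 ≤ M := by omega
  constructor
  · by_contra h
    push_neg at h
    have hgpos : 0 < Nat.gcd q2 M := Nat.gcd_pos_of_pos_left _ (by omega)
    have hg1 : Nat.gcd q2 M = 1 := by omega
    have hl2 : Nat.lcm M q2 = M * q2 := by
      have : Nat.Coprime M q2 := (Nat.coprime_comm.mp hg1)
      exact this.lcm_eq_mul
    set q : ℕ := M - a with hqdef
    have hq1 : 1 ≤ q := by omega
    have hq2' : q ≤ M - 2 := by omega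
    have hadvd : a ∣ Nat.gcd M q := Nat.dvd_gcd ⟨b, hab⟩ ⟨b - 1, by cases b with
      | zero => omega
      | succ n => simp [hqdef, hab, Nat.mul_sub_one]; ring_nf; omega⟩
    have hlcm_le : Nat.lcm M q * a ≤ M * q := by
      have hgl := Nat.gcd_mul_lcm M q
      have hga : a ≤ Nat.gcd M q := Nat.le_of_dvd (Nat.gcd_pos_of_pos_left _ (by omega)) hadvd
      calc Nat.lcm M q * a ≤ Nat.lcm M q * Nat.gcd M q := by
            exact Nat.mul_le_mul_left _ hga
        _ = M * q := by rw [mul_comm]; exact hgl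
    have hmin' := hmin q hq1 hq2'
    rw [hl2] at hmin'
    -- move to ℚ
    have hMQ : (4 : ℚ) ≤ (M : ℚ) := by exact_mod_cast hM
    have hq2Q : (1 : ℚ) ≤ (q2 : ℚ) := by exact_mod_cast hq
    have hq2le : (q2 : ℚ) ≤ (M : ℚ) - 2 := by
      have : (q2 : ℚ) ≤ ((M - 2 : ℕ) : ℚ) := by exact_mod_cast hle
      have h2 : ((M - 2 : ℕ) : ℚ) = (M : ℚ) - 2 := by
        push_cast [Nat.cast_sub (by omega : 2 ≤ M)]; ring
      linarith [this, h2.le]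
    have hqQ : (q : ℚ) = (M : ℚ) - (a : ℚ) := by
      push_cast [Nat.cast_sub (by omega : a ≤ M)]
      rw [hqdef, Nat.cast_sub (by omega : a ≤ M)]
    have haQ : (2 : ℚ) ≤ (a : ℚ) := by exact_mod_cast ha
    have haMQ : (a : ℚ) + 2 ≤ (M : ℚ) := by exact_mod_cast haM
    have hLpos : (0 : ℚ) < (Nat.lcm M q : ℚ) := by
      have : 0 < Nat.lcm M q := Nat.lcm_pos (by omega) (by omega)
      exact_mod_cast this
    have hLle : (Nat.lcm M q : ℚ) * (a : ℚ) ≤ (M : ℚ) * (q : ℚ) := by exact_mod_cast hlcm_le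
    have hqpos : (0 : ℚ) < (q : ℚ) := by rw [hqQ]; linarith
    have hMpos : (0 : ℚ) < (M : ℚ) := by linarith
    have hq2pos : (0 : ℚ) < (q2 : ℚ) := by linarith
    -- 1/L ≥ a/(M*q)
    have h1L : (a : ℚ) / ((M : ℚ) * q) ≤ 1 / (Nat.lcm M q : ℚ) := by
      rw [div_le_div_iff₀ (by positivity) hLpos]
      linarith [hLle]
    -- RHS ≤ 1/M
    have hrhs : (1 : ℚ) / q - 1 / (Nat.lcm M q : ℚ) ≤ 1 / (M : ℚ) := by
      have hMa : (M : ℚ) - (a : ℚ) ≠ 0 := by linarith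
      have : (1 : ℚ) / q - (a : ℚ) / ((M : ℚ) * q) = 1 / (M : ℚ) := by
        rw [hqQ]; field_simp
      linarith [h1L, this]
    push_cast at hmin'
    have hlhs : (1 : ℚ) / (M : ℚ) < 1 / (q2 : ℚ) - 1 / ((M : ℚ) * q2) := by
      rw [div_sub_div _ _ (by positivity) (by positivity)]
      rw [div_lt_div_iff₀ hMpos (by positivity)]
      nlinarith [mul_lt_mul_of_pos_left (show (q2:ℚ) < (M:ℚ) - 1 by linarith) (mul_pos hMpos hq2pos)]
    linarith
  · calc Nat.gcd q2 M ≤ q2 := Nat.le_of_dvd (by omega) (Nat.gcd_dvd_left _ _)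
      _ < M := by omega
end

section
/- Let M ≥ 2 be a natural number and K1 = M²·(M - 1) - 1. For any positive integers q1 with q1 ≤ M - 1 and any positive integers q2, q2', we have U(M, q2') < U(q1, q2), where U(a, b) = (1 + K1)/a + 1/b - 1/lcm(a, b). Consequently, in any minimizer (q1, q2) of U over {1,...,M} × {1,...,M-2}, the first coordinate equals M. -/
/-- The objective function U of the Step-1 problem, with K1 = M²(M-1) - 1. -/
def U (M q1 q2 : ℕ) : ℚ :=
  (1 + ((M ^ 2 * (M - 1) - 1 : ℕ) : ℚ)) / q1 + 1 / q2 - 1 / (Nat.lcm q1 q2)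

lemma key (M : ℕ) (hM : 2 ≤ M) (q1 q2 q2' : ℕ) (h1 : 1 ≤ q1) (h1' : q1 ≤ M - 1)
    (h2 : 1 ≤ q2) (h2' : 1 ≤ q2') : U M M q2' < U M q1 q2 := by
  have hN : M ^ 2 * (M - 1) - 1 + 1 = M ^ 2 * (M - 1) := by
    have h4 : 0 < M ^ 2 * (M - 1) := Nat.mul_pos (Nat.pow_pos (by omega : 0 < M)) (by omega)
    omega
  have hcast : (1 + ((M ^ 2 * (M - 1) - 1 : ℕ) : ℚ)) = ((M ^ 2 * (M - 1) : ℕ) : ℚ) := by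
    rw [add_comm]
    exact_mod_cast congrArg (Nat.cast : ℕ → ℚ) hN
  have hMm1 : ((M - 1 : ℕ) : ℚ) = (M : ℚ) - 1 := by
    have : 1 ≤ M := by omega
    push_cast [this]; ring
  have hM0 : (0 : ℚ) < (M : ℚ) := by positivity
  have hq1 : (0 : ℚ) < (q1 : ℚ) := by exact_mod_cast h1
  have hq2 : (0 : ℚ) < (q2 : ℚ) := by exact_mod_cast h2
  have hq2' : (0 : ℚ) < (q2' : ℚ) := by exact_mod_cast h2'
  have hlcm' : 0 < Nat.lcm M q2' := Nat.lcm_pos (by omega) h2'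
  have hlcm'Q : (0 : ℚ) < (Nat.lcm M q2' : ℚ) := by exact_mod_cast hlcm'
  have hlcm : 0 < Nat.lcm q1 q2 := Nat.lcm_pos h1 h2
  -- upper bound on U M M q2'
  have hub : U M M q2' < (M : ℚ) ^ 2 - M + 1 := by
    unfold U
    rw [hcast]
    have hdiv : ((M ^ 2 * (M - 1) : ℕ) : ℚ) / M = (M : ℚ) ^ 2 - M := by
      push_cast [hMm1]
      field_simp
    rw [hdiv]
    have h1 : 1 / (q2' : ℚ) ≤ 1 := by
      rw [div_le_one hq2']; exact_mod_cast h2'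
    have h2 : 0 < 1 / (Nat.lcm M q2' : ℚ) := by positivity
    linarith
  -- lower bound on U M q1 q2
  have hlb : (M : ℚ) ^ 2 ≤ U M q1 q2 := by
    unfold U
    rw [hcast]
    have hq1le : (q1 : ℚ) ≤ (M : ℚ) - 1 := by
      rw [← hMm1]; exact_mod_cast h1'
    have hfrac : (M : ℚ) ^ 2 ≤ ((M ^ 2 * (M - 1) : ℕ) : ℚ) / q1 := by
      rw [le_div_iff₀ hq1]
      push_cast [hMm1]
      nlinarith [sq_nonneg (M:ℚ)]
    have hq2lcm : q2 ≤ Nat.lcm q1 q2 := Nat.le_of_dvd hlcm (Nat.dvd_lcm_right _ _)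
    have : 1 / (Nat.lcm q1 q2 : ℚ) ≤ 1 / q2 := by
      apply one_div_le_one_div_of_le hq2
      exact_mod_cast hq2lcm
    linarith
  have hMQ : (1 : ℚ) ≤ (M : ℚ) := by exact_mod_cast (by omega : 1 ≤ M)
  calc U M M q2' < (M : ℚ) ^ 2 - M + 1 := hub
    _ ≤ (M : ℚ) ^ 2 := by linarith
    _ ≤ U M q1 q2 := hlb

theorem stmt_9 (M : ℕ) (hM : 2 ≤ M) :
    (∀ q1 q2 q2' : ℕ, 1 ≤ q1 → q1 ≤ M - 1 → 1 ≤ q2 → 1 ≤ q2' →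
      U M M q2' < U M q1 q2) ∧
    (∀ q1 q2 : ℕ, 1 ≤ q1 → q1 ≤ M → 1 ≤ q2 → q2 ≤ M - 2 →
      (∀ p1 p2 : ℕ, 1 ≤ p1 → p1 ≤ M → 1 ≤ p2 → p2 ≤ M - 2 →
        U M q1 q2 ≤ U M p1 p2) →
      q1 = M) := by
  refine ⟨fun q1 q2 q2' a b c d => key M hM q1 q2 q2' a b c d, ?_⟩
  intro q1 q2 hq1 hq1M hq2 hq2M hmin
  by_contra hne
  have hq1' : q1 ≤ M - 1 := by omega
  have := hmin M q2 (by omega) le_rfl hq2 hq2M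
  have := key M hM q1 q2 q2 hq1 hq1' hq2 hq2
  linarith
end

section
/- Let M ≥ 4 be a composite number and K1 = M²·(M - 1) - 1. If (q1, q2) minimizes U(q1, q2) = (1 + K1)/q1 + 1/q2 - 1/lcm(q1, q2) over pairs of positive integers with q1 ≤ M and q2 ≤ M - 2, then q1 = M and gcd(q2, M) is a non-trivial divisor of M (i.e., 1 < gcd(q2, M) < M). -/
private lemma key_frac (m q : ℕ) (hm : 0 < m) (hq : 0 < q) :
    (1:ℚ)/q - 1/(Nat.lcm m q) = ((m:ℚ) - Nat.gcd m q)/((m:ℚ)*q) := by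
  have hl : 0 < Nat.lcm m q := Nat.lcm_pos hm hq
  have hg : 0 < Nat.gcd m q := Nat.gcd_pos_of_pos_left q hm
  have h : ((Nat.gcd m q : ℚ)) * (Nat.lcm m q) = (m:ℚ) * q := by
    exact_mod_cast Nat.gcd_mul_lcm m q
  have hq' : (q:ℚ) ≠ 0 := by positivity
  have hl' : ((Nat.lcm m q : ℕ):ℚ) ≠ 0 := by positivity
  have hm' : (m:ℚ) ≠ 0 := by positivity
  field_simp
  ring_nf
  nlinarith [h]

private lemma numer_eq (M : ℕ) (hM : 4 ≤ M) :
    (1 + ((M ^ 2 * (M - 1) - 1 : ℕ) : ℚ)) = (M:ℚ)^2 * ((M:ℚ) - 1) := by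
  have h1 : 1 ≤ M ^ 2 * (M - 1) := by
    have : 1 ≤ M - 1 := by omega
    have : 1 ≤ M ^ 2 := by nlinarith
    nlinarith [Nat.sub_le M 1]
  have h2 : (1:ℕ) ≤ M := by omega
  push_cast [Nat.cast_sub h1, Nat.cast_sub h2]
  ring

private lemma U_at_M (M q : ℕ) (hM : 4 ≤ M) (hq : 0 < q) :
    U M M q = (M:ℚ)*((M:ℚ)-1) + ((M:ℚ) - Nat.gcd M q)/((M:ℚ)*q) := by
  have hM0 : (0:ℚ) < (M:ℚ) := by exact_mod_cast (by omega : 0 < M)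
  unfold U
  rw [numer_eq M hM]
  have : (M:ℚ)^2 * ((M:ℚ)-1) / M = (M:ℚ)*((M:ℚ)-1) := by
    field_simp
  rw [this]
  have := key_frac M q (by omega) hq
  linarith [this]

theorem stmt_10 (M a b q1 q2 : ℕ) (hM : 4 ≤ M) (hab : M = a * b) (ha : 2 ≤ a) (hb : 2 ≤ b)
    (hq1 : 1 ≤ q1) (hq1' : q1 ≤ M) (hq2 : 1 ≤ q2) (hq2' : q2 ≤ M - 2)
    (hmin : ∀ p1 p2 : ℕ, 1 ≤ p1 → p1 ≤ M → 1 ≤ p2 → p2 ≤ M - 2 →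
      U M q1 q2 ≤ U M p1 p2) :
    q1 = M ∧ 1 < Nat.gcd q2 M ∧ Nat.gcd q2 M < M := by
  have hM0 : (0:ℚ) < (M:ℚ) := by exact_mod_cast (by omega : 0 < M)
  -- witness p2 = M - b
  have hbM : b ≤ M - 2 := by
    have : 2 * b ≤ M := by nlinarith
    omega
  have hw1 : 1 ≤ M - b := by omega
  have hw2 : M - b ≤ M - 2 := by omega
  have hwpos : 0 < M - b := by omega
  -- bound U M M (M-b) ≤ M(M-1) + 1/M
  have hbdvd : b ∣ Nat.gcd M (M - b) :=
    Nat.dvd_gcd ⟨a, by rw [hab]; ring⟩ (Nat.dvd_sub ⟨a, by rw [hab]; ring⟩ dvd_rfl)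
  have hgpos : 0 < Nat.gcd M (M - b) := Nat.gcd_pos_of_pos_left _ (by omega)
  have hble : b ≤ Nat.gcd M (M - b) := Nat.le_of_dvd hgpos hbdvd
  have hwit : U M M (M - b) ≤ (M:ℚ)*((M:ℚ)-1) + 1/(M:ℚ) := by
    rw [U_at_M M (M-b) hM hwpos]
    have hcast : ((M - b : ℕ):ℚ) = (M:ℚ) - (b:ℚ) := by
      push_cast [Nat.cast_sub (by omega : b ≤ M)]; ring
    have hble' : (b:ℚ) ≤ (Nat.gcd M (M-b) : ℚ) := by exact_mod_cast hble
    have hb' : (2:ℚ) ≤ (b:ℚ) := by exact_mod_cast hb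
    have hwM : ((M - b : ℕ):ℚ) > 0 := by exact_mod_cast hwpos
    have : ((M:ℚ) - Nat.gcd M (M-b)) / ((M:ℚ) * (M-b : ℕ)) ≤ 1/(M:ℚ) := by
      rw [div_le_div_iff₀ (by positivity) hM0]
      rw [hcast]
      nlinarith
    linarith
  -- the minimizer value ≤ witness value
  have hle := hmin M (M - b) (by omega) le_rfl hw1 hw2
  have hmainlt : U M q1 q2 < (M:ℚ)^2 := by
    have hM4 : (4:ℚ) ≤ (M:ℚ) := by exact_mod_cast hM
    have h1 : (1:ℚ)/(M:ℚ) < (M:ℚ) := by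
      rw [div_lt_iff₀ hM0]; nlinarith [hM4]
    have : (M:ℚ)*((M:ℚ)-1) + 1/(M:ℚ) < (M:ℚ)^2 := by nlinarith
    linarith
  -- show q1 = M
  have hq1M : q1 = M := by
    by_contra h
    have hq1lt : q1 ≤ M - 1 := by omega
    have hq1pos : (0:ℚ) < (q1:ℚ) := by exact_mod_cast hq1
    have hq2pos : (0:ℚ) < (q2:ℚ) := by exact_mod_cast hq2
    have hlpos : 0 < Nat.lcm q1 q2 := Nat.lcm_pos (by omega) (by omega)
    have hlpos' : (0:ℚ) < (Nat.lcm q1 q2 : ℚ) := by exact_mod_cast hlpos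
    have h2 : (1:ℚ)/(Nat.lcm q1 q2 : ℚ) ≤ 1/(q2:ℚ) := by
      apply one_div_le_one_div_of_le hq2pos
      exact_mod_cast Nat.le_of_dvd hlpos (Nat.dvd_lcm_right q1 q2)
    have hq1le : (q1:ℚ) ≤ (M:ℚ) - 1 := by
      have : ((q1:ℕ):ℚ) ≤ ((M - 1 : ℕ):ℚ) := by exact_mod_cast hq1lt
      rw [Nat.cast_sub (by omega : 1 ≤ M)] at this
      simpa using this
    have h1 : (M:ℚ)^2 ≤ (1 + ((M ^ 2 * (M - 1) - 1 : ℕ) : ℚ)) / q1 := by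
      rw [numer_eq M hM, le_div_iff₀ hq1pos]
      nlinarith
    have : (M:ℚ)^2 ≤ U M q1 q2 := by
      unfold U; linarith
    linarith
  rw [hq1M] at hle
  -- now analyze gcd
  have hval := hle.trans hwit
  rw [U_at_M M q2 hM (by omega)] at hval
  have hq2pos : (0:ℚ) < (q2:ℚ) := by exact_mod_cast hq2
  have hfrac : ((M:ℚ) - Nat.gcd M q2) / ((M:ℚ) * q2) ≤ 1/(M:ℚ) := by linarith
  rw [div_le_div_iff₀ (by positivity) hM0] at hfrac
  have hq2le : (q2:ℚ) ≤ (M:ℚ) - 2 := by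
    have : ((q2:ℕ):ℚ) ≤ ((M - 2 : ℕ):ℚ) := by exact_mod_cast hq2'
    rw [Nat.cast_sub (by omega : 2 ≤ M)] at this
    simpa using this
  have hmul : (M:ℚ) * q2 ≤ (M:ℚ) * ((M:ℚ) - 2) :=
    mul_le_mul_of_nonneg_left hq2le hM0.le
  have h3 : 2 * (M:ℚ) ≤ (Nat.gcd M q2 : ℚ) * (M:ℚ) := by
    ring_nf at hfrac hmul ⊢
    linarith
  have hg2 : (2:ℚ) ≤ (Nat.gcd M q2 : ℚ) := le_of_mul_le_mul_right h3 hM0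
  have hg2' : 2 ≤ Nat.gcd M q2 := by exact_mod_cast hg2
  have hgle : Nat.gcd M q2 ≤ q2 := Nat.le_of_dvd (by omega) (Nat.gcd_dvd_right M q2)
  rw [Nat.gcd_comm]
  exact ⟨hq1M, by omega, by omega⟩
end

section
/- Let M ≥ 4 be composite. Then min over positive integers q ≤ M - 2 of (1/q - 1/lcm(M, q)) is at most 1/M, while for every q ≤ M - 2 coprime to M the value 1/q - 1/lcm(M, q) is strictly greater than 1/M. -/
theorem stmt_15 (M a b : ℕ) (hM : 4 ≤ M) (hab : M = a * b) (ha : 2 ≤ a) (hb : 2 ≤ b) :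
    (∃ q : ℕ, 1 ≤ q ∧ q ≤ M - 2 ∧
      (1 : ℚ) / q - 1 / (Nat.lcm M q) ≤ 1 / M) ∧
    (∀ q : ℕ, 1 ≤ q → q ≤ M - 2 → Nat.Coprime q M →
      1 / (M : ℚ) < (1 : ℚ) / q - 1 / (Nat.lcm M q)) := by
  constructor
  · refine ⟨M - a, ?_, ?_, ?_⟩
    · have : 2 * a ≤ M := by
        calc 2 * a ≤ b * a := Nat.mul_le_mul_right a hb
        _ = M := by rw [hab, Nat.mul_comm]
      omega
    · omega
    · have hq : M - a = a * (b - 1) := by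
        rw [hab, Nat.mul_sub, Nat.mul_one]
      have hqb : (M - a) * b = M * (b - 1) := by
        rw [hq, hab]; ring
      have hMpos : 0 < M := by omega
      have hqpos : 0 < M - a := by
        have : 2 * a ≤ M := by
          calc 2 * a ≤ b * a := Nat.mul_le_mul_right a hb
          _ = M := by rw [hab, Nat.mul_comm]
        omega
      have hLdvd : Nat.lcm M (M - a) ∣ M * (b - 1) := by
        apply Nat.lcm_dvd (dvd_mul_right _ _)
        rw [← hqb]
        exact dvd_mul_right _ _
      have hLpos : 0 < Nat.lcm M (M - a) :=
        Nat.pos_of_ne_zero (Nat.lcm_ne_zero (by omega) (by omega))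
      have hLle : Nat.lcm M (M - a) ≤ M * (b - 1) := by
        apply Nat.le_of_dvd _ hLdvd
        have : 1 ≤ b - 1 := by omega
        exact Nat.mul_pos hMpos this
      -- over ℚ
      have h1 : (1 : ℚ) / ((M : ℚ) * (b - 1 : ℕ)) ≤ 1 / (Nat.lcm M (M - a) : ℚ) := by
        apply one_div_le_one_div_of_le
        · exact_mod_cast hLpos
        · exact_mod_cast hLle
      have key : (1 : ℚ) / (M - a : ℕ) - 1 / ((M : ℚ) * (b - 1 : ℕ)) = 1 / M := by
        have hqbQ : ((M - a : ℕ) : ℚ) * b = (M : ℚ) * ((b - 1 : ℕ) : ℚ) := by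
          exact_mod_cast congrArg (fun n : ℕ => (n : ℚ)) hqb
        have hq0 : ((M - a : ℕ) : ℚ) ≠ 0 := by exact_mod_cast hqpos.ne'
        have hM0 : (M : ℚ) ≠ 0 := by exact_mod_cast hMpos.ne'
        have hb1 : ((b - 1 : ℕ) : ℚ) ≠ 0 := by
          have : 0 < b - 1 := by omega
          exact_mod_cast this.ne'
        have hb0 : (b : ℚ) ≠ 0 := by positivity
        rw [← hqbQ, div_sub_div _ _ hq0 (mul_ne_zero hq0 hb0), div_eq_div_iff
          (mul_ne_zero hq0 (mul_ne_zero hq0 hb0)) hM0]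
        have hqbQ2 : ((M - a : ℕ) : ℚ) * b = (M : ℚ) * ((b : ℚ) - 1) := by
          rw [hqbQ]; push_cast [show 1 ≤ b by omega]; ring
        nlinarith [hqbQ2]
      linarith [h1, key]
  · intro q hq1 hq2 hcop
    have hlcm : Nat.lcm M q = M * q := Nat.Coprime.lcm_eq_mul hcop.symm
    rw [hlcm]
    have hM0 : (0 : ℚ) < M := by positivity
    have hq0 : (0 : ℚ) < q := by exact_mod_cast hq1
    have hqM : (q : ℚ) ≤ (M : ℚ) - 2 := by
      have : (q : ℚ) ≤ ((M - 2 : ℕ) : ℚ) := by exact_mod_cast hq2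
      have h2 : ((M - 2 : ℕ) : ℚ) = (M : ℚ) - 2 := by
        have : (2 : ℕ) ≤ M := by omega
        push_cast [this]; ring
      linarith [this, h2.le, h2.ge]
    have e : 1/(q:ℚ) - 1/((M:ℚ)*q) = ((M:ℚ)-1)/((M:ℚ)*q) := by
      field_simp
    push_cast
    rw [e, div_lt_div_iff₀ hM0 (by positivity)]
    nlinarith
end
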